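/- arXiv:1903.02095 — 2 statements merged into one kernel-verified Lean document; each statement's English description precedes it below -/
import Mathlib

section
/- Let Λ = (λ, Σ, A) be a scale on a countable group G such that for every n ≥ 1, the set Σₙ is switching for Δₙ^{5λ(n)}, i.e., Σₙ·Z ∩ Z·Σₙ contains no products σz = z'σ' with (z, z') ≠ (e, e), where Z = Δₙ^{5λ(n)}. Then every g ∈ G admits at most one spike decomposition with respect to Λ. -/
open scoped Pointwise

variable {G : Type*} [Group G]

/-- The set of products of at most `k` elements of `D` (including the empty product). -/
def ball (D : Set G) (k : ℕ) : Set G :=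
  {g | ∃ l : List G, (∀ x ∈ l, x ∈ D) ∧ l.length ≤ k ∧ l.prod = g}

/-- `Δₙ`: the union of the spiking sets `Σᵢ` (for `1 ≤ i < n`), the filling sets `Aᵢ`
(for `i < n`), and their inverses. -/
def Delta (S A : ℕ → Set G) (n : ℕ) : Set G :=
  (⋃ i ∈ Set.Ico 1 n, (S i ∪ (S i)⁻¹)) ∪ (⋃ i ∈ Set.Iio n, (A i ∪ (A i)⁻¹))

/-- A spike decomposition of `g` of height `n`: `g = a·σ·b` with `σ ∈ Σₙ` and
`a, b ∈ Δₙ^{λ(n)}`. -/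
def IsSpikeDecomp (lam : ℕ → ℕ) (S A : ℕ → Set G) (g : G) (n : ℕ) (a σ b : G) : Prop :=
  1 ≤ n ∧ σ ∈ S n ∧ a ∈ ball (Delta S A n) (lam n) ∧ b ∈ ball (Delta S A n) (lam n) ∧
    g = a * σ * b

/-!
Two decompositions `aσb = a'σ'b'` of the same height `n` give `σ (b b'⁻¹) = (a⁻¹ a') σ'` with
both correction factors in `Δₙ^{2λ(n)}`, so switching forces them to be trivial. A decomposition
of height `n < n'` writes `g` as a word of length `2λ(n) + 1 ≤ 3λ(n')` in `Δ_{n'}`, so the spike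
`σ' = a'⁻¹ g b'⁻¹` of a decomposition of height `n'` would lie in `Δ_{n'}^{5λ(n')}`; but a switching
set avoiding `1` is disjoint from its `Z`.
-/

def IsSwitching (Z Sw : Set G) : Prop :=
  ∀ z ∈ Z, ∀ z' ∈ Z, ∀ σ ∈ Sw, ∀ σ' ∈ Sw, σ * z = z' * σ' → z = 1 ∧ z' = 1

namespace IsSwitching

variable {Z Sw : Set G}

theorem notMem (hsw : IsSwitching Z Sw) (h1 : (1 : G) ∉ Sw) {σ : G} (hσ : σ ∈ Sw) :
    σ ∉ Z := fun hσZ ↦ h1 <| (hsw σ hσZ σ hσZ σ hσ σ hσ rfl).1 ▸ hσ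

theorem eq_of_mul_mul_eq (hsw : IsSwitching Z Sw) {a σ b a' σ' b' : G}
    (ha : a⁻¹ * a' ∈ Z) (hb : b * b'⁻¹ ∈ Z) (hσ : σ ∈ Sw) (hσ' : σ' ∈ Sw)
    (h : a * σ * b = a' * σ' * b') : a = a' ∧ σ = σ' ∧ b = b' := by
  have hswap : σ * (b * b'⁻¹) = (a⁻¹ * a') * σ' := by
    calc σ * (b * b'⁻¹) = a⁻¹ * (a * σ * b) * b'⁻¹ := by group
      _ = (a⁻¹ * a') * σ' := by rw [h]; group
  obtain ⟨hb1, ha1⟩ := hsw _ hb _ ha σ hσ σ' hσ' hswap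
  obtain rfl := inv_mul_eq_one.1 ha1
  obtain rfl := mul_inv_eq_one.1 hb1
  exact ⟨rfl, mul_left_cancel (mul_right_cancel h), rfl⟩

end IsSwitching

section ball

variable {D : Set G}

theorem ball_mono {D' : Set G} {k k' : ℕ} (hD : D ⊆ D') (hk : k ≤ k') :
    ball D k ⊆ ball D' k' := by
  rintro x ⟨l, hl, hlen, rfl⟩
  exact ⟨l, fun y hy ↦ hD (hl y hy), hlen.trans hk, rfl⟩

theorem mul_mem_ball {j k : ℕ} {x y : G} (hx : x ∈ ball D j) (hy : y ∈ ball D k) :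
    x * y ∈ ball D (j + k) := by
  obtain ⟨l, hl, hlen, rfl⟩ := hx
  obtain ⟨m, hm, hmlen, rfl⟩ := hy
  refine ⟨l ++ m, fun z hz ↦ ?_, by simpa using add_le_add hlen hmlen, List.prod_append⟩
  exact (List.mem_append.1 hz).elim (hl z) (hm z)

theorem mem_ball_one {x : G} (hx : x ∈ D) : x ∈ ball D 1 :=
  ⟨[x], by simpa using hx, le_rfl, List.prod_singleton⟩

theorem inv_mem_ball (hD : ∀ x ∈ D, x⁻¹ ∈ D) {k : ℕ} {x : G} (hx : x ∈ ball D k) :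
    x⁻¹ ∈ ball D k := by
  obtain ⟨l, hl, hlen, rfl⟩ := hx
  refine ⟨(l.map (·⁻¹)).reverse, ?_, by simpa using hlen, (List.prod_inv_reverse l).symm⟩
  simp only [List.mem_reverse, List.mem_map]
  rintro _ ⟨y, hy, rfl⟩
  exact hD y (hl y hy)

end ball

section Delta

variable {S A : ℕ → Set G}

theorem inv_mem_Delta {n : ℕ} {x : G} (hx : x ∈ Delta S A n) : x⁻¹ ∈ Delta S A n := by
  simp only [Delta, Set.mem_union, Set.mem_iUnion, Set.mem_inv, inv_inv] at hx ⊢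
  grind

theorem Delta_mono {n n' : ℕ} (h : n ≤ n') : Delta S A n ⊆ Delta S A n' :=
  Set.union_subset_union
    (Set.biUnion_subset_biUnion_left fun _ hi ↦ ⟨hi.1, hi.2.trans_le h⟩)
    (Set.biUnion_subset_biUnion_left fun _ hi ↦ lt_of_lt_of_le hi h)

theorem mem_Delta_of_mem {n n' : ℕ} (h1 : 1 ≤ n) (h : n < n') {σ : G} (hσ : σ ∈ S n) :
    σ ∈ Delta S A n' :=
  Or.inl <| Set.mem_biUnion ⟨h1, h⟩ (Or.inl hσ)

end Delta

namespace IsSpikeDecomp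

variable {lam : ℕ → ℕ} {S A : ℕ → Set G} {g a σ b : G} {n : ℕ}

theorem mem_ball_of_lt (h : IsSpikeDecomp lam S A g n a σ b) {n' : ℕ} (hn : n < n') :
    g ∈ ball (Delta S A n') (lam n + 1 + lam n) := by
  obtain ⟨hn1, hσ, ha, hb, rfl⟩ := h
  have hD := Delta_mono (S := S) (A := A) hn.le
  exact mul_mem_ball (mul_mem_ball (ball_mono hD le_rfl ha)
    (mem_ball_one (mem_Delta_of_mem hn1 hn hσ))) (ball_mono hD le_rfl hb)

theorem mem_ball_of_mem_ball (h : IsSpikeDecomp lam S A g n a σ b) {k : ℕ}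
    (hg : g ∈ ball (Delta S A n) k) : σ ∈ ball (Delta S A n) (lam n + k + lam n) := by
  obtain ⟨-, -, ha, hb, rfl⟩ := h
  have hσ : σ = a⁻¹ * (a * σ * b) * b⁻¹ := by group
  rw [hσ]
  exact mul_mem_ball (mul_mem_ball (inv_mem_ball (fun _ ↦ inv_mem_Delta) ha) hg)
    (inv_mem_ball (fun _ ↦ inv_mem_Delta) hb)

theorem height_le {n' : ℕ} {a' σ' b' : G} (hlam : Monotone lam) (hpos : 1 ≤ lam n')
    (h1 : (1 : G) ∉ S n') (hsw : IsSwitching (ball (Delta S A n') (5 * lam n')) (S n'))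
    (h : IsSpikeDecomp lam S A g n a σ b) (h' : IsSpikeDecomp lam S A g n' a' σ' b') :
    n' ≤ n := not_lt.1 fun hn ↦
  hsw.notMem h1 h'.2.1 <| ball_mono subset_rfl (by have := hlam hn.le; omega) <|
    h'.mem_ball_of_mem_ball (h.mem_ball_of_lt hn)

theorem eq_of_height_eq {a' σ' b' : G}
    (hsw : IsSwitching (ball (Delta S A n) (5 * lam n)) (S n))
    (h : IsSpikeDecomp lam S A g n a σ b) (h' : IsSpikeDecomp lam S A g n a' σ' b') :
    a = a' ∧ σ = σ' ∧ b = b' := by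
  obtain ⟨-, hσ, ha, hb, rfl⟩ := h
  obtain ⟨-, hσ', ha', hb', hg⟩ := h'
  have hD : ∀ x ∈ Delta S A n, x⁻¹ ∈ Delta S A n := fun _ ↦ inv_mem_Delta
  exact hsw.eq_of_mul_mul_eq
    (ball_mono subset_rfl (by omega) (mul_mem_ball (inv_mem_ball hD ha) ha'))
    (ball_mono subset_rfl (by omega) (mul_mem_ball hb (inv_mem_ball hD hb'))) hσ hσ' hg

end IsSpikeDecomp

/-- If each `Σₙ` is switching for `Δₙ^{5λ(n)}`, then spike decompositions are unique. -/
theorem spike_decomp_unique_of_switching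
    (lam : ℕ → ℕ) (S A : ℕ → Set G)
    (hlam : Monotone lam) (hlampos : ∀ n, 1 ≤ lam n)
    (hS1 : ∀ n, 1 ≤ n → (1 : G) ∉ S n)
    (hsw : ∀ n, 1 ≤ n → ∀ z ∈ ball (Delta S A n) (5 * lam n),
      ∀ z' ∈ ball (Delta S A n) (5 * lam n), ∀ σ ∈ S n, ∀ σ' ∈ S n,
        σ * z = z' * σ' → z = 1 ∧ z' = 1)
    (g : G) (n : ℕ) (a σ b : G) (n' : ℕ) (a' σ' b' : G)
    (h1 : IsSpikeDecomp lam S A g n a σ b) (h2 : IsSpikeDecomp lam S A g n' a' σ' b') :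
    n = n' ∧ a = a' ∧ σ = σ' ∧ b = b' := by
  obtain rfl : n = n' := le_antisymm
    (h2.height_le hlam (hlampos n) (hS1 n h1.1) (hsw n h1.1) h1)
    (h1.height_le hlam (hlampos n') (hS1 n' h2.1) (hsw n' h2.1) h2)
  exact ⟨rfl, h1.eq_of_height_eq (hsw n h1.1) h2⟩
end

section
/- Let (Xₙ, εₙ) be i.i.d. random variables with values in ℤ₊ × {0,1} and joint law p̃, let p be the marginal of p̃ on ℤ₊, and suppose (a) Σⱼ (pⱼ/(pⱼ + p_{j+1} + ...))² < ∞ and (b) Σⱼ αⱼ < ∞, where αⱼ = p̃_{j,1}/pⱼ. Then almost surely ε_{T_k} = 0 for all sufficiently large k, where T_k are the weak record times of (Xₙ). -/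
open MeasureTheory ProbabilityTheory

/-- The weak record times of the sequence `(Xₙ)`: `T₁ = 1`,
`T_{k+1} = min {n > T_k : Xₙ ≥ X_{T_k}}` (junk value `0` if the set is empty).
Here `recT X k` denotes `T_{k+1}`. -/
noncomputable def recT {Ω : Type*} (X : ℕ → Ω → ℕ) : ℕ → Ω → ℕ
  | 0, _ => 1
  | k + 1, ω => sInf {n : ℕ | recT X k ω < n ∧ X (recT X k ω) ω ≤ X n ω}

/-!
Call a value `j` *flagged* if at some time `t ≥ 1` we have `X_t = j` with flag `ε_t = true`
while `X_1, …, X_{t-1} ≤ j`. By independence this has probability at most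
`∑ₙ P(X ≤ j)ⁿ p̃_{j,1} = p̃_{j,1} / P(X > j)`. Condition (a) forces `pⱼ ≤ P(X > j)` for large `j`,
so these probabilities are eventually bounded by `αⱼ`, and by (b) and Borel–Cantelli only finitely
many values are flagged. As the support of `p` is infinite, `X` exceeds every level infinitely
often, so the record values tend to infinity; a record time with flag `true` flags its value.
-/

open Filter Set
open scoped ENNReal

section WeakRecords

variable {Ω : Type*} {X : ℕ → Ω → ℕ} {ω : Ω}

lemma recT_succ_spec (hX : ∀ j, ∃ᶠ n in atTop, j < X n ω) (k : ℕ) :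
    recT X k ω < recT X (k + 1) ω ∧ X (recT X k ω) ω ≤ X (recT X (k + 1) ω) ω := by
  obtain ⟨n, hn, hXn⟩ := frequently_atTop.mp (hX (X (recT X k ω) ω)) (recT X k ω + 1)
  exact Nat.sInf_mem (s := {n | recT X k ω < n ∧ X (recT X k ω) ω ≤ X n ω}) ⟨n, hn, hXn.le⟩

lemma succ_le_recT (hX : ∀ j, ∃ᶠ n in atTop, j < X n ω) (k : ℕ) : k + 1 ≤ recT X k ω := by
  induction k with
  | zero => rfl
  | succ k ih => exact ih.trans_lt (recT_succ_spec hX k).1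

lemma le_recT_val_of_lt_recT (hX : ∀ j, ∃ᶠ n in atTop, j < X n ω) {m : ℕ} (hm : 1 ≤ m) :
    ∀ {k}, m < recT X k ω → X m ω ≤ X (recT X k ω) ω
  | 0, hlt => absurd hlt (by rw [recT]; omega)
  | k + 1, hlt => by
    refine le_trans ?_ (recT_succ_spec hX k).2
    rcases lt_trichotomy m (recT X k ω) with h | rfl | h
    · exact le_recT_val_of_lt_recT hX hm h
    · exact le_rfl
    · have := Nat.notMem_of_lt_sInf hlt
      simp only [mem_ofPred_eq, not_and, not_le] at this
      exact (this h).le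

lemma tendsto_recT_val (hX : ∀ j, ∃ᶠ n in atTop, j < X n ω) :
    Tendsto (fun k => X (recT X k ω) ω) atTop atTop := by
  refine tendsto_atTop_atTop_of_monotone
    (monotone_nat_of_le_succ fun k => (recT_succ_spec hX k).2) fun j => ?_
  obtain ⟨n, hn, hjn⟩ := frequently_atTop.mp (hX j) 1
  exact ⟨n, hjn.le.trans (le_recT_val_of_lt_recT hX hn (succ_le_recT hX n))⟩

end WeakRecords

section IIDSequence

variable {Ω β : Type*} [MeasurableSpace Ω] [MeasurableSpace β] {μ : Measure Ω}
  {Z : ℕ → Ω → β} {pt : Measure β} [NeZero pt]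

lemma measure_biInter_preimage_eq_prod (hindep : iIndepFun Z μ) (hdist : ∀ i, μ.map (Z i) = pt)
    (S : Finset ℕ) {D : ℕ → Set β} (hD : ∀ i, MeasurableSet (D i)) :
    μ (⋂ i ∈ S, Z i ⁻¹' D i) = ∏ i ∈ S, pt (D i) := by
  rw [hindep.meas_biInter fun i _ => ⟨D i, hD i, rfl⟩]
  refine Finset.prod_congr rfl fun i _ => ?_
  have hZ : AEMeasurable (Z i) μ := .of_map_ne_zero (hdist i ▸ NeZero.ne pt)
  rw [← hdist i, Measure.map_apply_of_aemeasurable hZ (hD i)]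

lemma ae_frequently_notMem (hindep : iIndepFun Z μ) (hdist : ∀ i, μ.map (Z i) = pt)
    {A : Set β} (hA : MeasurableSet A) (hlt : pt A < 1) :
    ∀ᵐ ω ∂μ, ∃ᶠ n in atTop, Z n ω ∉ A := by
  have hnull : ∀ N, μ {ω | ∀ n ≥ N, Z n ω ∈ A} = 0 := fun N => by
    refine le_antisymm (ge_of_tendsto' (ENNReal.tendsto_pow_atTop_nhds_zero_of_lt_one hlt)
      fun M => ?_) bot_le
    calc μ {ω | ∀ n ≥ N, Z n ω ∈ A}
        ≤ μ (⋂ i ∈ Finset.Ico N (N + M), Z i ⁻¹' A) :=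
          measure_mono fun ω hω => mem_iInter₂.mpr fun i hi => hω i (Finset.mem_Ico.mp hi).1
      _ = pt A ^ M := by
          rw [measure_biInter_preimage_eq_prod hindep hdist _ fun _ => hA, Finset.prod_const,
            Nat.card_Ico, Nat.add_sub_cancel_left]
  simp only [ae_iff, not_frequently, not_not, eventually_atTop, ofPred_exists]
  exact measure_iUnion_null hnull

end IIDSequence

def flaggedWeakRecordAt {Ω : Type*} (Z : ℕ → Ω → ℕ × Bool) (j n : ℕ) : Set Ω :=
  {ω | (∀ m ∈ Finset.Icc 1 n, (Z m ω).1 ≤ j) ∧ Z (n + 1) ω = (j, true)}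

lemma mem_flaggedWeakRecordAt_recT {Ω : Type*} {X : ℕ → Ω → ℕ} {ε : ℕ → Ω → Bool} {ω : Ω}
    (hX : ∀ j, ∃ᶠ n in atTop, j < X n ω) {k : ℕ} (hε : ε (recT X k ω) ω = true) :
    ω ∈ flaggedWeakRecordAt (fun i ω => (X i ω, ε i ω)) (X (recT X k ω) ω) (recT X k ω - 1) := by
  have hT : recT X k ω - 1 + 1 = recT X k ω := by have := succ_le_recT hX k; omega
  refine ⟨fun m hm => le_recT_val_of_lt_recT hX (Finset.mem_Icc.mp hm).1 ?_, ?_⟩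
  · have := (Finset.mem_Icc.mp hm).2; omega
  · rw [hT]; exact Prod.ext rfl hε

section FlaggedRecords

variable {Ω : Type*} [MeasurableSpace Ω] {μ : Measure Ω}
  {Z : ℕ → Ω → ℕ × Bool} {pt : Measure (ℕ × Bool)}

lemma measure_flaggedWeakRecordAt [NeZero pt] (hindep : iIndepFun Z μ)
    (hdist : ∀ i, μ.map (Z i) = pt) (j n : ℕ) :
    μ (flaggedWeakRecordAt Z j n) = pt (Prod.fst ⁻¹' Iic j) ^ n * pt {(j, true)} := by
  set D : ℕ → Set (ℕ × Bool) := Function.update (fun _ => Prod.fst ⁻¹' Iic j) (n + 1) {(j, true)}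
  have hD : ∀ i ∈ Finset.Icc 1 n, D i = Prod.fst ⁻¹' Iic j := fun i hi =>
    Function.update_of_ne (by have := (Finset.mem_Icc.mp hi).2; omega) _ _
  have hDlast : D (n + 1) = {(j, true)} := Function.update_self _ _ _
  have hevent : flaggedWeakRecordAt Z j n = ⋂ i ∈ insert (n + 1) (Finset.Icc 1 n), Z i ⁻¹' D i := by
    ext ω
    simp only [Finset.set_biInter_insert, hDlast, flaggedWeakRecordAt, mem_inter_iff,
      mem_iInter₂, mem_preimage, mem_singleton_iff, mem_ofPred_eq]
    rw [and_comm]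
    exact and_congr_right' (forall₂_congr fun i hi => by rw [hD i hi]; rfl)
  rw [hevent, measure_biInter_preimage_eq_prod hindep hdist _ fun _ => .of_discrete,
    Finset.prod_insert (by simp), Finset.prod_congr rfl fun i hi => congrArg pt (hD i hi),
    Finset.prod_const, Nat.card_Icc, Nat.add_sub_cancel, hDlast, mul_comm]

lemma measure_iUnion_flaggedWeakRecordAt_le [IsProbabilityMeasure pt] (hindep : iIndepFun Z μ)
    (hdist : ∀ i, μ.map (Z i) = pt) (j : ℕ) :
    μ (⋃ n, flaggedWeakRecordAt Z j n) ≤ pt {(j, true)} / pt.map Prod.fst (Ioi j) := by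
  have hIoi : pt.map Prod.fst (Ioi j) = 1 - pt (Prod.fst ⁻¹' Iic j) := by
    rw [Measure.map_apply measurable_fst measurableSet_Ioi, ← compl_Iic, preimage_compl,
      prob_compl_eq_one_sub (measurable_fst measurableSet_Iic)]
  calc μ (⋃ n, flaggedWeakRecordAt Z j n)
      ≤ ∑' n, μ (flaggedWeakRecordAt Z j n) := measure_iUnion_le _
    _ = ∑' n, pt (Prod.fst ⁻¹' Iic j) ^ n * pt {(j, true)} := by
        simp only [measure_flaggedWeakRecordAt hindep hdist]
    _ = pt {(j, true)} / pt.map Prod.fst (Ioi j) := by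
        rw [ENNReal.tsum_mul_right, ENNReal.tsum_geometric, hIoi, div_eq_mul_inv, mul_comm]

end FlaggedRecords

section MeasuresOnNat

variable {ν : Measure ℕ}

lemma measure_Ioi_ne_zero_of_infinite (h : {j | ν {j} ≠ 0}.Infinite) (j : ℕ) : ν (Ioi j) ≠ 0 := by
  obtain ⟨j', hj', hjj'⟩ := h.exists_gt j
  exact fun h0 => hj' (measure_mono_null (singleton_subset_iff.mpr hjj') h0)

lemma measure_Iic_lt_one_of_infinite [IsProbabilityMeasure ν] (h : {j | ν {j} ≠ 0}.Infinite)
    (j : ℕ) : ν (Iic j) < 1 := by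
  refine prob_le_one.lt_of_ne fun h1 => measure_Ioi_ne_zero_of_infinite h j ?_
  rwa [← compl_Iic, prob_compl_eq_zero_iff .of_discrete]

lemma measure_Ici_eq_add (j : ℕ) : ν (Ici j) = ν {j} + ν (Ioi j) := by
  rw [← Ioi_insert, insert_eq,
    measure_union (disjoint_singleton_left.mpr self_notMem_Ioi) .of_discrete]

lemma eventually_measure_singleton_le_measure_Ioi [IsFiniteMeasure ν]
    (h : ∑' j, (ν {j} / ν (Ici j)) ^ 2 ≠ ⊤) : ∀ᶠ j in atTop, ν {j} ≤ ν (Ioi j) := by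
  have hsmall : ∀ᶠ j in atTop, (ν {j} / ν (Ici j)) ^ 2 ≤ 2⁻¹ ^ 2 :=
    (ENNReal.tendsto_atTop_zero_of_tsum_ne_top h).eventually
      (eventually_le_nhds (ENNReal.pow_pos (by simp) 2))
  filter_upwards [hsmall] with j hj
  have hhalf : ν {j} ≤ 2⁻¹ * (ν {j} + ν (Ioi j)) := by
    rw [← measure_Ici_eq_add, ← ENNReal.div_le_iff_le_mul (.inr (by simp)) (.inr (by simp))]
    exact (ENNReal.pow_le_pow_left_iff two_ne_zero).mp hj
  have htwice : ν {j} + ν {j} ≤ ν {j} + ν (Ioi j) := by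
    calc ν {j} + ν {j} = 2 * ν {j} := (two_mul _).symm
      _ ≤ 2 * (2⁻¹ * (ν {j} + ν (Ioi j))) := by gcongr
      _ = ν {j} + ν (Ioi j) := by
          rw [← mul_assoc, ENNReal.mul_inv_cancel two_ne_zero ENNReal.ofNat_ne_top, one_mul]
  exact (ENNReal.add_le_add_iff_left (measure_ne_top ν _)).mp htwice

end MeasuresOnNat

lemma ENNReal.tsum_ne_top_of_eventually_le {f g : ℕ → ℝ≥0∞} (hf : ∀ j, f j ≠ ⊤)
    (hfg : ∀ᶠ j in atTop, f j ≤ g j) (hg : ∑' j, g j ≠ ⊤) : ∑' j, f j ≠ ⊤ := by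
  obtain ⟨J, hJ⟩ := eventually_atTop.mp hfg
  rw [← ENNReal.summable.sum_add_tsum_nat_add' (k := J)]
  refine ENNReal.add_ne_top.mpr ⟨ENNReal.sum_ne_top.mpr fun j _ => hf j, ?_⟩
  refine ne_top_of_le_ne_top hg ((ENNReal.tsum_le_tsum fun i => hJ _ (by omega)).trans ?_)
  exact ENNReal.tsum_comp_le_tsum_of_injective (add_left_injective J) g

theorem records_eventually_in_subpopulation_general
    {Ω : Type*} [MeasurableSpace Ω] (μ : Measure Ω)
    (pt : Measure (ℕ × Bool)) [IsProbabilityMeasure pt]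
    (X : ℕ → Ω → ℕ) (ε : ℕ → Ω → Bool)
    (hindep : iIndepFun (fun i ω => (X i ω, ε i ω)) μ)
    (hdist : ∀ i, μ.map (fun ω => (X i ω, ε i ω)) = pt)
    (hsupp : {j : ℕ | (pt.map Prod.fst) {j} ≠ 0}.Infinite)
    (hsumA : ∑' j : ℕ,
      ((pt.map Prod.fst) {j} / (pt.map Prod.fst) (Set.Ici j)) ^ 2 ≠ ⊤)
    (hsumB : ∑' j : ℕ, pt {(j, true)} / (pt.map Prod.fst) {j} ≠ ⊤) :
    ∀ᵐ ω ∂μ, ∃ K, ∀ k ≥ K, ε (recT X k ω) ω = false := by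
  set ν := pt.map Prod.fst
  have : IsProbabilityMeasure ν := Measure.isProbabilityMeasure_map measurable_fst.aemeasurable
  have hunbounded : ∀ᵐ ω ∂μ, ∀ j, ∃ᶠ n in atTop, j < X n ω := by
    refine ae_all_iff.mpr fun j => ?_
    have hlt : pt (Prod.fst ⁻¹' Iic j) < 1 := by
      rw [← Measure.map_apply measurable_fst .of_discrete]
      exact measure_Iic_lt_one_of_infinite hsupp j
    filter_upwards [ae_frequently_notMem hindep hdist .of_discrete hlt] with ω hω
    simpa using hω
  have hbound := measure_iUnion_flaggedWeakRecordAt_le hindep hdist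
  have hsum : ∑' j, μ (⋃ n, flaggedWeakRecordAt (fun i ω => (X i ω, ε i ω)) j n) ≠ ⊤ := by
    refine ENNReal.tsum_ne_top_of_eventually_le (g := fun j => pt {(j, true)} / ν {j})
      (fun j => ne_top_of_le_ne_top ?_ (hbound j)) ?_ hsumB
    · exact ENNReal.div_ne_top (measure_ne_top pt _) (measure_Ioi_ne_zero_of_infinite hsupp j)
    · filter_upwards [eventually_measure_singleton_le_measure_Ioi hsumA] with j hj
      exact (hbound j).trans (ENNReal.div_le_div_left hj _)
  filter_upwards [hunbounded, ae_eventually_notMem hsum] with ω hω hrare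
  obtain ⟨K, hK⟩ := eventually_atTop.mp ((tendsto_recT_val hω).eventually hrare)
  refine ⟨K, fun k hk => Bool.eq_false_iff.mpr fun hflag => hK k hk ?_⟩
  exact mem_iUnion.mpr ⟨_, mem_flaggedWeakRecordAt_recT hω hflag⟩

/-- If the marginal `p` of the i.i.d. pairs `(Xₙ, εₙ)` satisfies the eventual record
simplicity condition and `Σⱼ αⱼ < ∞` with `αⱼ = p̃_{j,1}/pⱼ`, then almost surely
`ε_{T_k} = 0` (i.e. `false`) for all sufficiently large `k`. -/
theorem records_eventually_in_subpopulation
    {Ω : Type*} [MeasurableSpace Ω] (μ : Measure Ω) [IsProbabilityMeasure μ]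
    (pt : Measure (ℕ × Bool)) [IsProbabilityMeasure pt]
    (X : ℕ → Ω → ℕ) (ε : ℕ → Ω → Bool)
    (hmeas : ∀ i, Measurable fun ω => (X i ω, ε i ω))
    (hindep : iIndepFun (fun i ω => (X i ω, ε i ω)) μ)
    (hdist : ∀ i, μ.map (fun ω => (X i ω, ε i ω)) = pt)
    (hsupp : {j : ℕ | (pt.map Prod.fst) {j} ≠ 0}.Infinite)
    (hsumA : ∑' j : ℕ,
      ((pt.map Prod.fst) {j} / (pt.map Prod.fst) (Set.Ici j)) ^ 2 ≠ ⊤)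
    (hsumB : ∑' j : ℕ, pt {(j, true)} / (pt.map Prod.fst) {j} ≠ ⊤) :
    ∀ᵐ ω ∂μ, ∃ K, ∀ k ≥ K, ε (recT X k ω) ω = false :=
  records_eventually_in_subpopulation_general μ pt X ε hindep hdist hsupp hsumA hsumB
end
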